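/- Resonance lower bound for opposite signs at separated frequencies: Let 0 < c < 1, ξ₁, ξ₂ ∈ ℝ³, τ₁, τ₂ ∈ ℝ, set ξ = ξ₁ + ξ₂ and τ = τ₁ + τ₂, and assume |ξ₂| ≤ ((1−c)/(2(1+c)))|ξ₁| or |ξ₁| ≤ ((1−c)/(2(1+c)))|ξ₂|. Then for either choice of sign ±₀: max(⟨τ ±₀ c|ξ|⟩, ⟨τ₁ − |ξ₁|⟩, ⟨τ₂ + |ξ₂|⟩) ≥ ((1−c)/6)·max(|ξ₁|, |ξ₂|). -/

import Mathlib

noncomputable section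

open MeasureTheory Real ENNReal


abbrev Sp3 := EuclideanSpace ℝ (Fin 3)

/-- Japanese bracket `⟨r⟩ = (1 + r²)^{1/2}`. -/
def jb (r : ℝ) : ℝ := Real.sqrt (1 + r ^ 2)

/-- Space-time Fourier transform on `ℝ³ × ℝ`. -/
def ftST (u : Sp3 × ℝ → ℂ) (p : Sp3 × ℝ) : ℂ :=
  ∫ q : Sp3 × ℝ, Complex.exp (-Complex.I * (((inner ℝ q.1 p.1 : ℝ) + q.2 * p.2 : ℝ) : ℂ)) * u q

/-- Inverse space-time Fourier transform on `ℝ³ × ℝ`. -/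
def ftSTinv (u : Sp3 × ℝ → ℂ) (q : Sp3 × ℝ) : ℂ :=
  (((2 * Real.pi) ^ (4 : ℕ) : ℝ) : ℂ)⁻¹ *
    ∫ p : Sp3 × ℝ, Complex.exp (Complex.I * (((inner ℝ q.1 p.1 : ℝ) + q.2 * p.2 : ℝ) : ℂ)) * u p

/-- `X^{s,b}`-type norm with sign `σ` and propagation speed `c` (wave case: `c = 1`). -/
def Xnorm (σ c s b : ℝ) (u : Sp3 × ℝ → ℂ) : ℝ≥0∞ :=
  (∫⁻ p : Sp3 × ℝ,
      ENNReal.ofReal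
        (jb ‖p.1‖ ^ (2 * s) * jb (p.2 + σ * c * ‖p.1‖) ^ (2 * b) * ‖ftST u p‖ ^ 2)) ^ (1 / 2 : ℝ)

/-- Dyadic frequency-modulation block `K^{σ,c}_{N,L}`. -/
def Kset (σ c N L : ℝ) : Set (Sp3 × ℝ) :=
  {p | N ≤ jb ‖p.1‖ ∧ jb ‖p.1‖ ≤ 2 * N ∧ L ≤ jb (p.2 + σ * c * ‖p.1‖) ∧
    jb (p.2 + σ * c * ‖p.1‖) ≤ 2 * L}

/-- Space-time Fourier projection onto the set `K`. -/
def Pproj (K : Set (Sp3 × ℝ)) (u : Sp3 × ℝ → ℂ) : Sp3 × ℝ → ℂ :=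
  ftSTinv (K.indicator (ftST u))

def IsDyadic (N : ℝ) : Prop := ∃ k : ℕ, N = 2 ^ k

/-- `Q_ω`: space-time frequencies whose spatial direction lies in `ω ⊆ S²`. -/
def Qcap (ω : Set Sp3) : Set (Sp3 × ℝ) := {p | p.1 ≠ 0 ∧ ‖p.1‖⁻¹ • p.1 ∈ ω}

/-- Angular separation of two subsets of the sphere. -/
def angSep (ω₁ ω₂ : Set Sp3) : ℝ :=
  sInf {θ : ℝ | ∃ x ∈ ω₁, ∃ y ∈ ω₂, θ = InnerProductGeometry.angle x y}

/-- The trilinear convolution form `I(f,g₁,g₂)`. -/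
def trI (f g₁ g₂ : Sp3 × ℝ → ℂ) : ℂ :=
  ∫ q : (Sp3 × ℝ) × (Sp3 × ℝ), f (q.1.1 + q.2.1, q.1.2 + q.2.2) * g₁ q.1 * g₂ q.2

/-!
The three modulations add up to the resonance function:
`(τ₁ + τ₂ ± c|ξ₁ + ξ₂|) - (τ₁ - |ξ₁|) - (τ₂ + |ξ₂|) = ±c|ξ₁ + ξ₂| + |ξ₁| - |ξ₂|`,
so one of them is at least a third of its absolute value. When `|ξ₂| ≤ k|ξ₁|` with
`k = (1 - c) / (2(1 + c))`, the triangle inequality `|ξ₁ + ξ₂| ≤ |ξ₁| + |ξ₂|` gives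
`±c|ξ₁ + ξ₂| + |ξ₁| - |ξ₂| ≥ (1 - c)|ξ₁| - (1 + c)|ξ₂| ≥ (1 - c)|ξ₁| / 2`; the other case is symmetric.
-/

lemma abs_le_jb (r : ℝ) : |r| ≤ jb r := by
  rw [jb, ← Real.sqrt_sq_eq_abs]
  exact Real.sqrt_le_sqrt (by nlinarith)

lemma abs_sub_sub_le_three_mul_max_jb (A B C : ℝ) :
    |A - B - C| ≤ 3 * max (jb A) (max (jb B) (jb C)) := by
  have hA := (abs_le_jb A).trans (le_max_left (jb A) (max (jb B) (jb C)))
  have hB := (abs_le_jb B).trans ((le_max_left (jb B) (jb C)).trans (le_max_right (jb A) _))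
  have hC := (abs_le_jb C).trans ((le_max_right (jb B) (jb C)).trans (le_max_right (jb A) _))
  calc |A - B - C| ≤ |A| + |B| + |C| := by linarith [abs_sub (A - B) C, abs_sub A B]
    _ ≤ _ := by linarith

section Resonance

variable {E : Type*} [SeminormedAddCommGroup E] {c σ : ℝ} {x y : E}

lemma norm_le_norm_of_separated (hc : 0 ≤ c) (hsep : ‖y‖ ≤ (1 - c) / (2 * (1 + c)) * ‖x‖) :
    ‖y‖ ≤ ‖x‖ := by
  have hk : (1 - c) / (2 * (1 + c)) ≤ 1 := by
    rw [div_le_one (by positivity)]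
    linarith
  exact hsep.trans (mul_le_of_le_one_left (norm_nonneg x) hk)

lemma half_mul_norm_le_resonance (hc : 0 ≤ c) (hσ : |σ| ≤ 1)
    (hsep : ‖y‖ ≤ (1 - c) / (2 * (1 + c)) * ‖x‖) :
    (1 - c) / 2 * ‖x‖ ≤ σ * c * ‖x + y‖ + ‖x‖ - ‖y‖ := by
  have hsep' : (1 + c) * ‖y‖ ≤ (1 - c) / 2 * ‖x‖ := by
    rw [div_mul_eq_mul_div, le_div_iff₀ (by positivity)] at hsep
    linarith
  have hσcs : -(c * (‖x‖ + ‖y‖)) ≤ σ * c * ‖x + y‖ := by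
    have h : |σ * c * ‖x + y‖| ≤ c * (‖x‖ + ‖y‖) := by
      rw [abs_mul, abs_mul, abs_of_nonneg hc, abs_norm]
      calc |σ| * c * ‖x + y‖ ≤ 1 * c * ‖x + y‖ := by gcongr
        _ ≤ c * (‖x‖ + ‖y‖) := by rw [one_mul]; gcongr; exact norm_add_le x y
    exact neg_le_of_abs_le h
  linarith

lemma half_mul_max_norm_le_abs_resonance (hc : 0 ≤ c) (hσ : |σ| ≤ 1)
    (hsep : ‖y‖ ≤ (1 - c) / (2 * (1 + c)) * ‖x‖ ∨ ‖x‖ ≤ (1 - c) / (2 * (1 + c)) * ‖y‖) :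
    (1 - c) / 2 * max ‖x‖ ‖y‖ ≤ |σ * c * ‖x + y‖ + ‖x‖ - ‖y‖| := by
  rcases hsep with hsep | hsep
  · rw [max_eq_left (norm_le_norm_of_separated hc hsep)]
    exact (half_mul_norm_le_resonance hc hσ hsep).trans (le_abs_self _)
  · rw [max_eq_right (norm_le_norm_of_separated hc hsep)]
    have h := half_mul_norm_le_resonance hc (σ := -σ) (by rwa [abs_neg]) hsep
    rw [add_comm y x] at h
    exact h.trans (le_of_eq_of_le (by ring) (neg_le_abs _))

end Resonance

theorem resonance_opposite_signs_general (c : ℝ) (hc0 : 0 < c)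
    (ξ₁ ξ₂ : Sp3) (τ₁ τ₂ : ℝ)
    (hsep : ‖ξ₂‖ ≤ (1 - c) / (2 * (1 + c)) * ‖ξ₁‖ ∨ ‖ξ₁‖ ≤ (1 - c) / (2 * (1 + c)) * ‖ξ₂‖)
    (σ₀ : ℝ) (hσ₀ : σ₀ = 1 ∨ σ₀ = -1) :
    (1 - c) / 6 * max ‖ξ₁‖ ‖ξ₂‖ ≤
      max (jb (τ₁ + τ₂ + σ₀ * c * ‖ξ₁ + ξ₂‖)) (max (jb (τ₁ - ‖ξ₁‖)) (jb (τ₂ + ‖ξ₂‖))) := by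
  have hσ : |σ₀| ≤ 1 := by rcases hσ₀ with rfl | rfl <;> norm_num
  have hres := half_mul_max_norm_le_abs_resonance hc0.le hσ hsep
  have hsum : σ₀ * c * ‖ξ₁ + ξ₂‖ + ‖ξ₁‖ - ‖ξ₂‖ =
      (τ₁ + τ₂ + σ₀ * c * ‖ξ₁ + ξ₂‖) - (τ₁ - ‖ξ₁‖) - (τ₂ + ‖ξ₂‖) := by ring
  rw [hsum] at hres
  linarith [abs_sub_sub_le_three_mul_max_jb (τ₁ + τ₂ + σ₀ * c * ‖ξ₁ + ξ₂‖) (τ₁ - ‖ξ₁‖) (τ₂ + ‖ξ₂‖)]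

/-- Resonance lower bound for opposite signs at separated frequencies (Lemma 1.2). -/
theorem resonance_opposite_signs (c : ℝ) (hc0 : 0 < c) (hc1 : c < 1)
    (ξ₁ ξ₂ : Sp3) (τ₁ τ₂ : ℝ)
    (hsep : ‖ξ₂‖ ≤ (1 - c) / (2 * (1 + c)) * ‖ξ₁‖ ∨ ‖ξ₁‖ ≤ (1 - c) / (2 * (1 + c)) * ‖ξ₂‖)
    (σ₀ : ℝ) (hσ₀ : σ₀ = 1 ∨ σ₀ = -1) :
    (1 - c) / 6 * max ‖ξ₁‖ ‖ξ₂‖ ≤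
      max (jb (τ₁ + τ₂ + σ₀ * c * ‖ξ₁ + ξ₂‖)) (max (jb (τ₁ - ‖ξ₁‖)) (jb (τ₂ + ‖ξ₂‖))) :=
  resonance_opposite_signs_general c hc0 ξ₁ ξ₂ τ₁ τ₂ hsep σ₀ hσ₀
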